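/- Consider the action of the group (𝔽₁₇ˣ)³ on GL₂(𝔽₁₇) given by (s,t,u)·M = diag(s,u)·M·diag(t,u⁻¹), where diag(α,β) denotes the invertible diagonal 2×2 matrix with diagonal entries α, β. This is a group action, and it has exactly 321 orbits; equivalently, the equivalence relation M ∼ M′ ⇔ ∃ s,t,u ∈ 𝔽₁₇ˣ, M′ = diag(s,u)·M·diag(t,u⁻¹) on GL₂(𝔽₁₇) has exactly 321 equivalence classes. -/

import Mathlib

/-!
Write `M = !![a, b; c, d]`. The action sends it to `!![s t a, s u⁻¹ b; u t c, d]`, so `d`, the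
vanishing of `b` and of `c`, and the ratio `r = a / (b c)` (zero when `b c = 0`) are invariant.
Conversely, already `u = 1` and suitable `s, t` connect any two invertible matrices with the same
invariants, so the orbits correspond to the attainable invariants: `r d ≠ 1` when `b c ≠ 0`
(this is `det M ≠ 0`), and `r = 0`, `d ≠ 0` otherwise. Over `𝔽₁₇` there are
`17² - 16 + 3 · 16 = 321` of them.
-/

namespace DoubleCosets17

/-- The relation on `GL₂(𝔽₁₇)` induced by the action of `(𝔽₁₇ˣ)³` given by
`(s,t,u)·M = diag(s,u)·M·diag(t,u⁻¹)`: `M ∼ M′` iff `M′ = diag(s,u)·M·diag(t,u⁻¹)`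
for some units `s, t, u` of `𝔽₁₇`. -/
def rel (M M' : Matrix.GeneralLinearGroup (Fin 2) (ZMod 17)) : Prop :=
  ∃ s t u : (ZMod 17)ˣ,
    (M' : Matrix (Fin 2) (Fin 2) (ZMod 17)) =
      Matrix.diagonal ![(s : ZMod 17), (u : ZMod 17)] *
        (M : Matrix (Fin 2) (Fin 2) (ZMod 17)) *
        Matrix.diagonal ![(t : ZMod 17), ((u⁻¹ : (ZMod 17)ˣ) : ZMod 17)]

open Matrix

variable {K : Type*}

theorem diagonal_mul_mul_diagonal [CommRing K] (A : Matrix (Fin 2) (Fin 2) K) (s t u : Kˣ) :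
    diagonal ![(s : K), u] * A * diagonal ![(t : K), ↑u⁻¹] =
      !![s * t * A 0 0, s * ↑u⁻¹ * A 0 1; u * t * A 1 0, A 1 1] := by
  ext i j
  fin_cases i <;> fin_cases j <;> simp [mul_comm, mul_left_comm, mul_assoc]

section Field

variable [Field K]

theorem exists_units_of_ratio_eq {a b c a' b' c' : K} (ha : b * c = 0 → a ≠ 0)
    (ha' : b' * c' = 0 → a' ≠ 0) (hb : b = 0 ↔ b' = 0) (hc : c = 0 ↔ c' = 0)
    (hr : a * (b * c)⁻¹ = a' * (b' * c')⁻¹) :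
    ∃ s t : Kˣ, a' = s * t * a ∧ b' = s * b ∧ c' = t * c := by
  rcases eq_or_ne b 0 with hb0 | hb0 <;> rcases eq_or_ne c 0 with hc0 | hc0
  · have := ha (by simp [hb0]); have := ha' (by simp [hb.1 hb0])
    refine ⟨.mk0 (a' / a) (by simp [*]), 1, ?_, by simp [hb0, hb.1 hb0], by simp [hc0, hc.1 hc0]⟩
    simp only [Units.val_mk0, Units.val_one]
    field_simp
  · have := ha (by simp [hb0]); have := ha' (by simp [hb.1 hb0]); have := mt hc.2 hc0
    refine ⟨.mk0 (a' * c / (a * c')) (by simp [*]), .mk0 (c' / c) (by simp [*]), ?_,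
      by simp [hb0, hb.1 hb0], ?_⟩ <;> simp only [Units.val_mk0] <;> field_simp
  · have := ha (by simp [hc0]); have := ha' (by simp [hc.1 hc0]); have := mt hb.2 hb0
    refine ⟨.mk0 (b' / b) (by simp [*]), .mk0 (a' * b / (a * b')) (by simp [*]), ?_, ?_,
      by simp [hc0, hc.1 hc0]⟩ <;> simp only [Units.val_mk0] <;> field_simp
  · have := mt hb.2 hb0; have := mt hc.2 hc0
    refine ⟨.mk0 (b' / b) (by simp [*]), .mk0 (c' / c) (by simp [*]), ?_, ?_, ?_⟩ <;>
      simp only [Units.val_mk0] <;> field_simp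
    field_simp at hr
    linear_combination -hr

variable [DecidableEq K]

def orbitInvariant (A : Matrix (Fin 2) (Fin 2) K) : K × Bool × Bool × K :=
  (A 1 1, decide (A 0 1 = 0), decide (A 1 0 = 0), A 0 0 * (A 0 1 * A 1 0)⁻¹)

theorem orbitInvariant_diagonal_mul_mul_diagonal (A : Matrix (Fin 2) (Fin 2) K) (s t u : Kˣ) :
    orbitInvariant (diagonal ![(s : K), u] * A * diagonal ![(t : K), ↑u⁻¹]) =
      orbitInvariant A := by
  rw [diagonal_mul_mul_diagonal, Units.val_inv_eq_inv_val]
  simp only [orbitInvariant, of_apply, cons_val', cons_val_zero, cons_val_one, empty_val',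
    cons_val_fin_one, mul_eq_zero, inv_eq_zero, Units.ne_zero, false_or, Prod.mk.injEq, true_and]
  field_simp

theorem exists_units_of_orbitInvariant_eq {A B : Matrix (Fin 2) (Fin 2) K} (hA : A.det ≠ 0)
    (hB : B.det ≠ 0) (h : orbitInvariant A = orbitInvariant B) :
    ∃ s t u : Kˣ, B = diagonal ![(s : K), u] * A * diagonal ![(t : K), ↑u⁻¹] := by
  have corner_ne_zero {C : Matrix (Fin 2) (Fin 2) K} (hC : C.det ≠ 0) :
      C 0 1 * C 1 0 = 0 → C 0 0 ≠ 0 := fun hbc ha ↦ hC (by rw [det_fin_two, hbc, ha]; ring)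
  simp only [orbitInvariant, Prod.mk.injEq, decide_eq_decide] at h
  obtain ⟨hd, hb, hc, hr⟩ := h
  obtain ⟨s, t, ha, hb, hc⟩ :=
    exists_units_of_ratio_eq (corner_ne_zero hA) (corner_ne_zero hB) hb hc hr
  refine ⟨s, t, 1, ?_⟩
  rw [diagonal_mul_mul_diagonal, eta_fin_two B]
  simp [ha, hb, hc, hd]

theorem orbitInvariant_eq_iff (M M' : GL (Fin 2) K) :
    orbitInvariant M.val = orbitInvariant M'.val ↔
      ∃ s t u : Kˣ, M'.val = diagonal ![(s : K), u] * M * diagonal ![(t : K), ↑u⁻¹] :=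
  ⟨exists_units_of_orbitInvariant_eq M.det_ne_zero M'.det_ne_zero,
    fun ⟨s, t, u, h⟩ ↦ by rw [h, orbitInvariant_diagonal_mul_mul_diagonal]⟩

def orbitInvariants : Set (K × Bool × Bool × K) :=
  {x | if x.2.1 || x.2.2.1 then x.2.2.2 = 0 ∧ x.1 ≠ 0 else x.2.2.2 * x.1 ≠ 1}

theorem orbitInvariant_mem_orbitInvariants {A : Matrix (Fin 2) (Fin 2) K} (hA : A.det ≠ 0) :
    orbitInvariant A ∈ orbitInvariants := by
  rw [det_fin_two] at hA
  simp only [orbitInvariants, orbitInvariant, Set.mem_ofPred_eq]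
  by_cases hb : A 0 1 = 0 <;> by_cases hc : A 1 0 = 0 <;> simp_all
  intro h
  field_simp at h
  exact hA (by linear_combination h)

theorem exists_orbitInvariant_eq {x : K × Bool × Bool × K} (hx : x ∈ orbitInvariants) :
    ∃ M : GL (Fin 2) K, orbitInvariant M.val = x := by
  obtain ⟨d, _ | _, _ | _, r⟩ := x <;> simp only [orbitInvariants, Set.mem_ofPred_eq] at hx
  · exact ⟨.mkOfDetNeZero !![r, 1; 1, d] (by simpa [det_fin_two] using sub_ne_zero.2 hx),
      by simp [orbitInvariant]⟩
  · exact ⟨.mkOfDetNeZero !![1, 1; 0, d] (by simp [det_fin_two, hx.2]),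
      by simp [orbitInvariant, hx.1]⟩
  · exact ⟨.mkOfDetNeZero !![1, 0; 1, d] (by simp [det_fin_two, hx.2]),
      by simp [orbitInvariant, hx.1]⟩
  · exact ⟨.mkOfDetNeZero !![1, 0; 0, d] (by simp [det_fin_two, hx.2]),
      by simp [orbitInvariant, hx.1]⟩

theorem range_orbitInvariant :
    Set.range (fun M : GL (Fin 2) K ↦ orbitInvariant M.val) = orbitInvariants :=
  Set.Subset.antisymm (Set.range_subset_iff.2 fun M ↦ orbitInvariant_mem_orbitInvariants
    M.det_ne_zero) fun _ hx ↦ exists_orbitInvariant_eq hx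

end Field

theorem fact_prime_seventeen : Fact (Nat.Prime 17) := ⟨by norm_num⟩

section

attribute [local instance] fact_prime_seventeen

set_option maxRecDepth 8000 in
theorem card_orbitInvariants_zmod_17 :
    Nat.card (orbitInvariants : Set (ZMod 17 × Bool × Bool × ZMod 17)) = 321 := by
  rw [orbitInvariants, Nat.card_eq_fintype_card]
  decide

end

/-- The action `(s,t,u)·M = diag(s,u)·M·diag(t,u⁻¹)` of `(𝔽₁₇ˣ)³` on `GL₂(𝔽₁₇)` is a
group action and it has exactly `321` orbits; equivalently, the induced relation `rel`
is an equivalence relation with exactly `321` equivalence classes. -/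
theorem card_quotient_rel_eq_321 :
    ∃ hrel : Equivalence rel,
      Nat.card (Quotient (⟨rel, hrel⟩ :
        Setoid (Matrix.GeneralLinearGroup (Fin 2) (ZMod 17)))) = 321 := by
  have := fact_prime_seventeen
  let ker := Setoid.ker fun M : GL (Fin 2) (ZMod 17) ↦ orbitInvariant M.val
  have rel_iff (M M' : GL (Fin 2) (ZMod 17)) : rel M M' ↔ ker M M' :=
    (orbitInvariant_eq_iff M M').symm.trans Setoid.ker_def.symm
  have rel_eq_ker : rel = ker := funext₂ fun M M' ↦ propext (rel_iff M M')
  refine ⟨rel_eq_ker ▸ ker.iseqv, ?_⟩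
  rw [← card_orbitInvariants_zmod_17, ← range_orbitInvariant]
  exact Nat.card_congr ((Quotient.congrRight rel_iff).trans (Setoid.quotientKerEquivRange _))

end DoubleCosets17
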